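/- Let ω ∈ ℝ be (γ,τ)-Diophantine and let v(θ) = Σ_{k≠0} v̂_k e^{2πikθ} with Σ_{k≠0} |v̂_k| e^{2π|k|ρ} < ∞ and zero average. Then the formal solution u(θ) = Σ_{k≠0} (v̂_k/(1 − e^{2πikω})) e^{2πikθ} converges absolutely on every strip of width ρ − δ (0 < δ < ρ), and satisfies u(θ) − u(θ + ω) = v(θ) for all θ. -/

import Mathlib

open Real Complex

lemma abs_one_sub_exp (t : ℝ) :
    ‖1 - Complex.exp ((t : ℂ) * Complex.I)‖ = 2 * |Real.sin (t / 2)| := by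
  have h : (1 : ℂ) - Complex.exp ((t : ℂ) * Complex.I)
      = Complex.exp (((t / 2 : ℝ) : ℂ) * Complex.I)
        * (-2 * Complex.I * Complex.sin ((t / 2 : ℝ) : ℂ)) := by
    rw [Complex.sin]
    have e1 : Complex.exp (((t/2:ℝ):ℂ) * Complex.I) * Complex.exp (-((t/2:ℝ):ℂ) * Complex.I) = 1 := by
      rw [← Complex.exp_add]; ring_nf; exact Complex.exp_zero
    have e2 : Complex.exp (((t/2:ℝ):ℂ) * Complex.I) * Complex.exp (((t/2:ℝ):ℂ) * Complex.I)
        = Complex.exp ((t:ℂ) * Complex.I) := by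
      rw [← Complex.exp_add]; push_cast; ring_nf
    have hI : Complex.I * Complex.I = -1 := Complex.I_mul_I
    linear_combination (Complex.exp (((t/2:ℝ):ℂ) * Complex.I) * Complex.exp (-((t/2:ℝ):ℂ) * Complex.I) - Complex.exp (((t/2:ℝ):ℂ) * Complex.I)^2) * hI - e1 + e2
  rw [h, norm_mul, Complex.norm_exp, ← Complex.ofReal_sin]
  simp [Complex.norm_real]
  rw [show ((t:ℂ)/2) = (((t/2:ℝ)):ℂ) by push_cast; ring, ← Complex.ofReal_sin, Complex.norm_real, Real.norm_eq_abs]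

/-- `ω ∈ ℝ` is `(γ,τ)`-Diophantine (case `n = 1`). -/
def IsDiophantine1 (ω γ τ : ℝ) : Prop :=
  ∀ k : ℤ, k ≠ 0 → ∀ m : ℤ, γ * (|k| : ℝ) ^ (-τ) ≤ |(k : ℝ) * ω - (m : ℝ)|

lemma key_lower (ω γ τ : ℝ) (hγ : 0 < γ) (hdio : IsDiophantine1 ω γ τ) (k : ℤ) (hk : k ≠ 0) :
    4 * (γ * (|k| : ℝ) ^ (-τ)) ≤
      ‖1 - Complex.exp (2 * Real.pi * Complex.I * (k : ℂ) * (ω : ℂ))‖ := by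
  have ht : (2 * (Real.pi:ℂ) * Complex.I * (k : ℂ) * (ω : ℂ))
      = (((2 * Real.pi * ((k:ℝ) * ω) : ℝ)) : ℂ) * Complex.I := by push_cast; ring
  rw [ht, abs_one_sub_exp]
  have hhalf : (2 * Real.pi * ((k:ℝ) * ω)) / 2 = Real.pi * ((k:ℝ) * ω) := by ring
  rw [hhalf]
  set x : ℝ := (k:ℝ) * ω with hxdef
  set m : ℤ := round x with hmdef
  have hd : γ * (|k| : ℝ) ^ (-τ) ≤ |x - (m:ℝ)| := hdio k hk m
  have hx2 : |x - (m:ℝ)| ≤ 1/2 := abs_sub_round x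
  have hper : |Real.sin (Real.pi * x)| = |Real.sin (Real.pi * (x - m))| := by
    have harg : Real.pi * x = Real.pi * (x - m) + m * Real.pi := by ring
    rw [harg, Real.sin_add_int_mul_pi, abs_mul]
    have hone : |((-1:ℝ)) ^ m| = 1 := by
      rcases Int.even_or_odd m with h | h
      · rw [h.neg_one_zpow]; simp
      · rw [h.neg_one_zpow]; simp
    rw [hone, one_mul]
  rw [hper]
  have h1 : |Real.pi * (x - m)| ≤ Real.pi / 2 := by
    rw [abs_mul, abs_of_pos Real.pi_pos]
    nlinarith [Real.pi_pos]
  have h2 := Real.mul_abs_le_abs_sin h1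
  have h3 : 2 / Real.pi * |Real.pi * (x - m)| = 2 * |x - (m:ℝ)| := by
    rw [abs_mul, abs_of_pos Real.pi_pos]
    field_simp
  rw [h3] at h2
  linarith

theorem formal_solution_converges (ω γ τ ρ : ℝ) (hγ : 0 < γ) (hτ : 1 ≤ τ)
    (hdio : IsDiophantine1 ω γ τ) (vhat : ℤ → ℂ) (hv0 : vhat 0 = 0)
    (hsum : Summable (fun k : ℤ => ‖vhat k‖ * Real.exp (2 * Real.pi * (|k| : ℝ) * ρ)))
    (δ : ℝ) (hδ : 0 < δ) (hδρ : δ < ρ) :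
    Summable (fun k : ℤ =>
      ‖vhat k / (1 - Complex.exp (2 * Real.pi * Complex.I * (k : ℂ) * (ω : ℂ)))‖ *
        Real.exp (2 * Real.pi * (|k| : ℝ) * (ρ - δ))) ∧
    ∀ θ : ℝ,
      (∑' k : ℤ, vhat k / (1 - Complex.exp (2 * Real.pi * Complex.I * (k : ℂ) * (ω : ℂ))) *
          Complex.exp (2 * Real.pi * Complex.I * (k : ℂ) * (θ : ℂ))) -
        (∑' k : ℤ, vhat k / (1 - Complex.exp (2 * Real.pi * Complex.I * (k : ℂ) * (ω : ℂ))) *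
          Complex.exp (2 * Real.pi * Complex.I * (k : ℂ) * ((θ + ω : ℝ) : ℂ))) =
      ∑' k : ℤ, vhat k * Complex.exp (2 * Real.pi * Complex.I * (k : ℂ) * (θ : ℂ)) := by
  have hτ0 : 0 < τ := lt_of_lt_of_le one_pos hτ
  set E : ℤ → ℂ := fun k => Complex.exp (2 * Real.pi * Complex.I * (k : ℂ) * (ω : ℂ)) with hE
  -- lower bound positivity
  have hkpos : ∀ k : ℤ, k ≠ 0 → (0:ℝ) < γ * (|k| : ℝ) ^ (-τ) := by
    intro k hk
    have : (0:ℝ) < (|k| : ℝ) := by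
      have : 0 < |k| := abs_pos.mpr hk
      exact_mod_cast this
    positivity
  have hlow : ∀ k : ℤ, k ≠ 0 → 4 * (γ * (|k| : ℝ) ^ (-τ)) ≤ ‖1 - E k‖ :=
    fun k hk => key_lower ω γ τ hγ hdio k hk
  have hne : ∀ k : ℤ, k ≠ 0 → (1 : ℂ) - E k ≠ 0 := by
    intro k hk
    have h4 : (0:ℝ) < 4 * (γ * (|k| : ℝ) ^ (-τ)) := by linarith [hkpos k hk]
    intro h0
    have := hlow k hk
    rw [h0] at this
    simp at this
    linarith
  -- polynomial-vs-exponential bound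
  have hpoly : ∀ x : ℝ, 0 ≤ x →
      x ^ τ * Real.exp (2 * Real.pi * x * (ρ - δ)) ≤
        (τ / (2 * Real.pi * δ)) ^ τ * Real.exp (2 * Real.pi * x * ρ) := by
    intro x hx
    have h2πδ : (0:ℝ) < 2 * Real.pi * δ := by positivity
    set y : ℝ := 2 * Real.pi * δ * x / τ with hy
    have hy0 : 0 ≤ y := by positivity
    have hyley : y ≤ Real.exp y := by linarith [Real.add_one_le_exp y]
    have hx_eq : x = (τ / (2 * Real.pi * δ)) * y := by
      rw [hy]; field_simp
    have h1 : x ^ τ = (τ / (2 * Real.pi * δ)) ^ τ * y ^ τ := by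
      rw [hx_eq, Real.mul_rpow (by positivity) hy0]
    have h2 : y ^ τ ≤ Real.exp (2 * Real.pi * δ * x) := by
      calc y ^ τ ≤ (Real.exp y) ^ τ := Real.rpow_le_rpow hy0 hyley hτ0.le
        _ = Real.exp (y * τ) := (Real.exp_mul y τ).symm
        _ = Real.exp (2 * Real.pi * δ * x) := by
            congr 1; rw [hy]; field_simp
    calc x ^ τ * Real.exp (2 * Real.pi * x * (ρ - δ))
        ≤ ((τ / (2 * Real.pi * δ)) ^ τ * Real.exp (2 * Real.pi * δ * x)) *
            Real.exp (2 * Real.pi * x * (ρ - δ)) := by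
          rw [h1]
          have := mul_le_mul_of_nonneg_right h2 (Real.exp_pos (2 * Real.pi * x * (ρ - δ))).le
          nlinarith [Real.rpow_nonneg (show (0:ℝ) ≤ τ / (2 * Real.pi * δ) by positivity) τ,
            Real.exp_pos (2 * Real.pi * x * (ρ - δ))]
      _ = (τ / (2 * Real.pi * δ)) ^ τ * Real.exp (2 * Real.pi * x * ρ) := by
          rw [mul_assoc, ← Real.exp_add,
            show 2 * Real.pi * δ * x + 2 * Real.pi * x * (ρ - δ) = 2 * Real.pi * x * ρ from by ring]
  set C : ℝ := (τ / (2 * Real.pi * δ)) ^ τ / (4 * γ) with hC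
  have hC0 : 0 ≤ C := by positivity
  -- main bound
  have hbound : ∀ k : ℤ,
      ‖vhat k / (1 - E k)‖ * Real.exp (2 * Real.pi * (|k| : ℝ) * (ρ - δ)) ≤
        C * (‖vhat k‖ * Real.exp (2 * Real.pi * (|k| : ℝ) * ρ)) := by
    intro k
    rcases eq_or_ne k 0 with rfl | hk
    · simp only [hv0, norm_zero, zero_div, norm_zero, zero_mul]
      positivity
    · have hkR : (0:ℝ) < (|k| : ℝ) := by
        have : 0 < |k| := abs_pos.mpr hk
        exact_mod_cast this
      have hEpos : 0 < ‖1 - E k‖ :=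
        lt_of_lt_of_le (by linarith [hkpos k hk]) (hlow k hk)
      have hstep1 : ‖vhat k / (1 - E k)‖ ≤
          ‖vhat k‖ * ((|k| : ℝ) ^ τ / (4 * γ)) := by
        rw [norm_div]
        have hrw : 4 * (γ * (|k| : ℝ) ^ (-τ)) = 4 * γ / (|k| : ℝ) ^ τ := by
          rw [Real.rpow_neg hkR.le]
          field_simp
        have hden : 4 * γ / (|k| : ℝ) ^ τ ≤ ‖1 - E k‖ := by
          rw [← hrw]; exact hlow k hk
        have hdpos : (0:ℝ) < 4 * γ / (|k| : ℝ) ^ τ := by positivity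
        calc ‖vhat k‖ / ‖1 - E k‖
            ≤ ‖vhat k‖ / (4 * γ / (|k| : ℝ) ^ τ) :=
              div_le_div_of_nonneg_left (norm_nonneg _) hdpos hden
          _ = ‖vhat k‖ * ((|k| : ℝ) ^ τ / (4 * γ)) := by
              rw [div_div_eq_mul_div]
              ring
      have hstep2 : (|k| : ℝ) ^ τ * Real.exp (2 * Real.pi * (|k| : ℝ) * (ρ - δ)) ≤
          (τ / (2 * Real.pi * δ)) ^ τ * Real.exp (2 * Real.pi * (|k| : ℝ) * ρ) :=
        hpoly _ hkR.le
      calc ‖vhat k / (1 - E k)‖ * Real.exp (2 * Real.pi * (|k| : ℝ) * (ρ - δ))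
          ≤ (‖vhat k‖ * ((|k| : ℝ) ^ τ / (4 * γ))) *
              Real.exp (2 * Real.pi * (|k| : ℝ) * (ρ - δ)) :=
            mul_le_mul_of_nonneg_right hstep1 (Real.exp_pos _).le
        _ = (‖vhat k‖ / (4 * γ)) *
              ((|k| : ℝ) ^ τ * Real.exp (2 * Real.pi * (|k| : ℝ) * (ρ - δ))) := by ring
        _ ≤ (‖vhat k‖ / (4 * γ)) *
              ((τ / (2 * Real.pi * δ)) ^ τ * Real.exp (2 * Real.pi * (|k| : ℝ) * ρ)) := by
            apply mul_le_mul_of_nonneg_left hstep2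
            positivity
        _ = C * (‖vhat k‖ * Real.exp (2 * Real.pi * (|k| : ℝ) * ρ)) := by
            rw [hC]; ring
  have hS : Summable (fun k : ℤ =>
      ‖vhat k / (1 - E k)‖ * Real.exp (2 * Real.pi * (|k| : ℝ) * (ρ - δ))) := by
    apply Summable.of_nonneg_of_le (fun k => by positivity) hbound
    exact hsum.mul_left C
  refine ⟨hS, ?_⟩
  intro θ
  -- summability of the individual series
  have habs : Summable (fun k : ℤ => ‖vhat k / (1 - E k)‖) := by
    apply Summable.of_nonneg_of_le (fun k => norm_nonneg _) _ hS
    intro k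
    nth_rewrite 1 [← mul_one (‖vhat k / (1 - E k)‖)]
    apply mul_le_mul_of_nonneg_left _ (norm_nonneg _)
    rw [← Real.exp_zero]
    apply Real.exp_le_exp.mpr
    have h0k : (0:ℝ) ≤ (|k| : ℝ) := by positivity
    have : (0:ℝ) ≤ ρ - δ := by linarith
    have := mul_nonneg (mul_nonneg (mul_nonneg (by norm_num : (0:ℝ) ≤ 2) Real.pi_pos.le) h0k) this
    linarith
  have habs_exp : ∀ s : ℝ, ∀ k : ℤ,
      ‖Complex.exp (2 * Real.pi * Complex.I * (k : ℂ) * (s : ℂ))‖ = 1 := by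
    intro s k
    rw [show (2 * (Real.pi:ℂ) * Complex.I * (k : ℂ) * (s : ℂ))
        = (((2 * Real.pi * ((k:ℝ) * s) : ℝ)) : ℂ) * Complex.I by push_cast; ring]
    exact Complex.norm_exp_ofReal_mul_I _
  have hsummand : ∀ s : ℝ, Summable (fun k : ℤ =>
      vhat k / (1 - E k) * Complex.exp (2 * Real.pi * Complex.I * (k : ℂ) * (s : ℂ))) := by
    intro s
    apply Summable.of_norm
    have : ∀ k : ℤ, ‖vhat k / (1 - E k) * Complex.exp (2 * Real.pi * Complex.I * (k : ℂ) * (s : ℂ))‖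
        = ‖vhat k / (1 - E k)‖ := by
      intro k
      rw [norm_mul]
      rw [habs_exp s k, mul_one]
    rw [funext this]
    exact habs
  rw [← Summable.tsum_sub (hsummand θ) (hsummand (θ + ω))]
  apply tsum_congr
  intro k
  rcases eq_or_ne k 0 with rfl | hk
  · simp [hv0]
  · have he : Complex.exp (2 * Real.pi * Complex.I * (k : ℂ) * ((θ + ω : ℝ) : ℂ))
        = Complex.exp (2 * Real.pi * Complex.I * (k : ℂ) * (θ : ℂ)) * E k := by
      rw [hE, ← Complex.exp_add]
      congr 1
      push_cast
      ring
    rw [he]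
    have h1 : (1:ℂ) - E k ≠ 0 := hne k hk
    field_simp
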